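/- arXiv:2001.00475 — 16 statements merged into one kernel-verified Lean document; each statement's English description precedes it below -/
import Mathlib

section
/- For every integer n > 3 there exist positive integers a, Δ and a positive integer b with 1 ≤ b < n such that ab(ab−1) − na = Δ². -/
/-- For every integer `n > 3` there exist positive integers `a, Δ` and `b` with
`1 ≤ b < n` such that `a*b*(a*b-1) - n*a = Δ^2`. -/
theorem stmt_1 (n : ℤ) (hn : 3 < n) :
    ∃ a b Δ : ℤ, 0 < a ∧ 1 ≤ b ∧ b < n ∧ 0 < Δ ∧
      a * b * (a * b - 1) - n * a = Δ ^ 2 := by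
  rcases Int.even_or_odd n with ⟨k, hk⟩ | ⟨k, hk⟩
  · -- n = 2k, take a = (k+1)^2, b = 1, Δ = k(k+1)
    refine ⟨(k + 1) ^ 2, 1, k * (k + 1), by nlinarith, le_refl _, by omega, by nlinarith, ?_⟩
    subst hk; ring
  · rcases Int.even_or_odd k with ⟨m, hm⟩ | ⟨m, hm⟩
    · -- n = 4m+1, take a = (m+1)^2, b = 2, Δ = (m+1)(2m+1)
      refine ⟨(m + 1) ^ 2, 2, (m + 1) * (2 * m + 1), by nlinarith, by omega, by omega,
        by nlinarith, ?_⟩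
      subst hm; subst hk; ring
    · -- n = 4m+3, take a = (m+2)^2, b = 1, Δ = m(m+2)
      refine ⟨(m + 2) ^ 2, 1, m * (m + 2), by nlinarith, le_refl _, by omega, by nlinarith, ?_⟩
      subst hm; subst hk; ring
end

section
/- Let p be a prime number and suppose there exist positive integers a, b, Δ such that ab(ab−1) − pa = Δ². If p divides a, then p = 2. -/
set_option maxHeartbeats 1000000 in
/-- If `p` is a prime and positive integers `a, b, Δ` satisfy
`a*b*(a*b-1) - p*a = Δ^2` with `p ∣ a`, then `p = 2`. -/
theorem stmt_2 (p : ℕ) (hp : p.Prime) (a b Δ : ℤ)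
    (ha : 0 < a) (hb : 0 < b) (hΔ : 0 < Δ)
    (heq : a * b * (a * b - 1) - (p : ℤ) * a = Δ ^ 2)
    (hdvd : (p : ℤ) ∣ a) : p = 2 := by
  by_contra hne
  have hq3' : 3 ≤ p := by
    have h2 := hp.two_le
    omega
  obtain ⟨q, hqdef⟩ : ∃ q : ℤ, q = (p : ℤ) := ⟨_, rfl⟩
  rw [← hqdef] at heq hdvd
  have hq3 : (3 : ℤ) ≤ q := by rw [hqdef]; exact_mod_cast hq3'
  have hqp : Prime q := hqdef ▸ Nat.prime_iff_prime_int.mp hp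
  have hq0 : q ≠ 0 := by linarith
  obtain ⟨c, hc⟩ := hdvd
  subst hc
  have hc0 : 0 < c := by
    rcases mul_pos_iff.mp ha with ⟨_, h⟩ | ⟨h1, _⟩
    · exact h
    · linarith
  -- q divides Δ
  have hq2 : q ∣ Δ ^ 2 := ⟨c * b * (q * c * b - 1) - q * c, by linear_combination -heq⟩
  obtain ⟨d, hd⟩ := hqp.dvd_of_dvd_pow hq2
  subst hd
  have hd0 : 0 < d := by
    rcases mul_pos_iff.mp hΔ with ⟨_, h⟩ | ⟨h1, _⟩
    · exact h
    · linarith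
  -- key divisibility: c*b = q*e
  have key : c * b = q * (c ^ 2 * b ^ 2 - c - d ^ 2) := by
    apply mul_left_cancel₀ hq0
    linear_combination -heq
  obtain ⟨e, hedef⟩ : ∃ e : ℤ, e = c ^ 2 * b ^ 2 - c - d ^ 2 := ⟨_, rfl⟩
  rw [← hedef] at key
  have he0 : 0 < e := by nlinarith [mul_pos hc0 hb]
  have hd2 : d ^ 2 = q ^ 2 * e ^ 2 - c - e := by
    linear_combination hedef + (c * b + q * e) * key
  have hfact : c + e = (q * e - d) * (q * e + d) := by linear_combination hd2
  have hqed0 : 0 < q * e + d := by nlinarith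
  have hqed : 1 ≤ q * e - d := by
    by_contra h
    push_neg at h
    have h' : q * e - d ≤ 0 := by linarith
    nlinarith [mul_nonneg (by linarith : (0:ℤ) ≤ d - q * e) (le_of_lt hqed0)]
  have hce : q * e + d ≤ c + e := by
    nlinarith [mul_le_mul_of_nonneg_right hqed (le_of_lt hqed0)]
  -- b = 1
  have hb1 : b = 1 := by
    by_contra h
    have hb2 : 2 ≤ b := by omega
    nlinarith [mul_nonneg (by linarith : (0:ℤ) ≤ b - 2) (le_of_lt hc0),
      mul_nonneg (by linarith : (0:ℤ) ≤ q - 3) (by linarith : (0:ℤ) ≤ e - 1)]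
  subst hb1
  have hcq : c = q * e := by linarith [key]
  have hd2' : d ^ 2 = q ^ 2 * e ^ 2 - q * e - e := by
    rw [hcq] at hd2; linarith
  clear heq hq2 hedef hfact hce key hd2 hcq ha hΔ hqed hqed0 hc0
  obtain ⟨u, hudef⟩ : ∃ u : ℤ, u = 2 * q ^ 2 * e - (q + 1) - 2 * q * d := ⟨_, rfl⟩
  obtain ⟨v, hvdef⟩ : ∃ v : ℤ, v = 2 * q ^ 2 * e - (q + 1) + 2 * q * d := ⟨_, rfl⟩
  have huv : u * v = (q + 1) ^ 2 := by
    linear_combination v * hudef + (2 * q ^ 2 * e - (q + 1) - 2 * q * d) * hvdef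
      - 4 * q ^ 2 * hd2'
  have hsum : u + v = 4 * q ^ 2 * e - 2 * (q + 1) := by
    linear_combination hudef + hvdef
  have hv : 2 * q ^ 2 + q - 1 ≤ v := by
    rw [hvdef]
    nlinarith [mul_nonneg (by linarith : (0:ℤ) ≤ e - 1) (sq_nonneg q)]
  have hv0 : 0 < v := by nlinarith
  have hu1 : 1 ≤ u := by
    have huv0 : 0 < u * v := by
      rw [huv]; positivity
    rcases mul_pos_iff.mp huv0 with ⟨h, _⟩ | ⟨_, h⟩
    · exact h
    · linarith
  have huq : u ≤ q := by
    by_contra h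
    push_neg at h
    have h' : q + 1 ≤ u := by linarith
    have hA : (0:ℤ) ≤ 2 * q ^ 2 + q - 1 := by nlinarith [sq_nonneg q]
    have hB : (0:ℤ) ≤ u := by linarith
    have hC := mul_le_mul h' hv hA hB
    rw [huv] at hC
    have hD : (0:ℤ) < (q - 1) * (q + 1) * (q + 1) :=
      mul_pos (mul_pos (by linarith) (by linarith)) (by linarith)
    nlinarith [hC, hD]
  have hsq : (u + q + 1) ^ 2 = 4 * q ^ 2 * e * u := by
    linear_combination u * hsum - huv
  have hqdvd : q ∣ u + q + 1 := by
    apply hqp.dvd_of_dvd_pow (n := 2)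
    exact ⟨q * (4 * e * u), by linear_combination hsq⟩
  obtain ⟨k, hk⟩ := hqdvd
  have hk2 : k = 2 := by
    rcases lt_trichotomy k 2 with h | h | h
    · have h1 : k ≤ 1 := by omega
      have h2 : q * k ≤ q * 1 := mul_le_mul_of_nonneg_left h1 (by linarith)
      linarith
    · exact h
    · have h3 : 3 ≤ k := by omega
      have h2 : q * 3 ≤ q * k := mul_le_mul_of_nonneg_left h3 (by linarith)
      linarith
  subst hk2
  have hu : u = q - 1 := by linarith
  rw [hu] at huv
  -- (q-1) * v = (q+1)^2 with v ≥ 2q²+q-1 and q ≥ 3 : contradiction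
  have hC : (q - 1) * (2 * q ^ 2 + q - 1) ≤ (q + 1) ^ 2 := by
    calc (q - 1) * (2 * q ^ 2 + q - 1) ≤ (q - 1) * v :=
          mul_le_mul_of_nonneg_left hv (by linarith)
      _ = (q + 1) ^ 2 := huv
  have hD : (0:ℤ) < 2 * q * (q - 2) * (q + 1) :=
    mul_pos (mul_pos (mul_pos (by norm_num) (by linarith)) (by linarith)) (by linarith)
  nlinarith [hC, hD]
end

section
/- Let p be a prime number and suppose there exist positive integers a, b and a nonnegative integer Δ such that ab(ab−1) − pa = Δ². If p divides b, then p = 2 (moreover, in that case a = 1, b = 2 and Δ = 0). -/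
/-- If `p` is a prime, `a, b` positive integers and `Δ ≥ 0` an integer satisfying
`a*b*(a*b-1) - p*a = Δ^2` with `p ∣ b`, then `p = 2`; moreover `a = 1`, `b = 2`,
`Δ = 0`. -/
theorem stmt_3 (p : ℕ) (hp : p.Prime) (a b Δ : ℤ)
    (ha : 0 < a) (hb : 0 < b) (hΔ : 0 ≤ Δ)
    (heq : a * b * (a * b - 1) - (p : ℤ) * a = Δ ^ 2)
    (hdvd : (p : ℤ) ∣ b) : p = 2 ∧ a = 1 ∧ b = 2 ∧ Δ = 0 := by
  have hp2 : (2 : ℤ) ≤ (p : ℤ) := by exact_mod_cast hp.two_le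
  have hpb : (p : ℤ) ≤ b := Int.le_of_dvd hb hdvd
  have hab : 1 ≤ a * b := mul_pos ha hb
  have hΔlt : Δ < a * b := by nlinarith
  rcases eq_or_lt_of_le hpb with hbp | hbp
  · -- b = p
    have h1 : (a * b - 1 - Δ) * (a * b - 1 + Δ) = 1 := by
      linear_combination heq + a * hbp
    rcases Int.mul_eq_one_iff_eq_one_or_neg_one.mp h1 with ⟨h2, h3⟩ | ⟨h2, h3⟩
    · have hΔ0 : Δ = 0 := by linarith
      have hab2 : a * b = 2 := by linarith
      have ha1 : a = 1 := by nlinarith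
      have hb2 : b = 2 := by rw [ha1, one_mul] at hab2; exact hab2
      have hpval : p = 2 := by
        have : (p : ℤ) = 2 := by rw [hbp, hb2]
        exact_mod_cast this
      exact ⟨hpval, ha1, hb2, hΔ0⟩
    · exfalso; linarith
  · -- b > p : derive contradiction
    exfalso
    have hkey : 1 ≤ a * (b - (p : ℤ)) := by nlinarith
    have h4 : a * b - 1 ≤ Δ := by nlinarith [sq_nonneg (Δ - (a * b - 1)), sq_nonneg (Δ + (a * b - 1))]
    have hΔeq : Δ = a * b - 1 := by linarith
    have h5 : a * (b - (p : ℤ)) = 1 := by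
      have := heq
      rw [hΔeq] at this
      nlinarith [this]
    have ha1 : a = 1 := by nlinarith
    have hbp1 : b = (p : ℤ) + 1 := by
      rw [ha1, one_mul] at h5; linarith
    have : (p : ℤ) ∣ 1 := by
      have := hdvd
      rw [hbp1] at this
      exact (Int.dvd_add_right (dvd_refl _)).mp this
    have := Int.le_of_dvd one_pos this
    linarith
end

section
/- Let p be a prime number and suppose there exist positive integers a, b, Δ with 1 ≤ b < p such that ab(ab−1) − pa = Δ². If p divides Δ, then p = 2. -/
/-- If `p` is a prime and positive integers `a, b, Δ` with `1 ≤ b < p` satisfy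
`a*b*(a*b-1) - p*a = Δ^2` and `p ∣ Δ`, then `p = 2`. -/
theorem stmt_4 (p : ℕ) (hp : p.Prime) (a b Δ : ℤ)
    (ha : 0 < a) (hb : 1 ≤ b) (hbp : b < (p : ℤ)) (hΔ : 0 < Δ)
    (heq : a * b * (a * b - 1) - (p : ℤ) * a = Δ ^ 2)
    (hdvd : (p : ℤ) ∣ Δ) : p = 2 := by
  set P : ℤ := (p : ℤ) with hPdef
  have hpi : Prime P := by rw [hPdef]; exact Nat.prime_iff_prime_int.mp hp
  have hp2 : 2 ≤ P := by rw [hPdef]; exact_mod_cast hp.two_le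
  set n : ℤ := a * b with hn
  have hna : a ≤ n := by nlinarith
  have hn1 : 1 ≤ n := by linarith
  have hΔ2 : P ^ 2 ∣ Δ ^ 2 := pow_dvd_pow_of_dvd hdvd 2
  have hpb : ¬ P ∣ b := by
    intro h
    have := Int.le_of_dvd (by linarith) h
    linarith
  have hdn : P ∣ n * (n - 1) := by
    have h1 : n * (n - 1) = Δ ^ 2 + P * a := by linarith
    rw [h1]
    exact dvd_add (dvd_pow hdvd two_ne_zero) ⟨a, rfl⟩
  rcases hpi.dvd_mul.mp hdn with hA | hB
  · -- Case p ∣ n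
    have hpa : P ∣ a := (hpi.dvd_mul.mp hA).resolve_right hpb
    have hsq : P ^ 2 ∣ n ^ 2 := pow_dvd_pow_of_dvd hA 2
    have hsum : P ^ 2 ∣ n + P * a := by
      have h2 : n + P * a = n ^ 2 - Δ ^ 2 := by ring_nf; nlinarith [heq]
      rw [h2]
      exact dvd_sub hsq hΔ2
    have hPa2 : P ^ 2 ∣ P * a := by
      obtain ⟨t, ht⟩ := hpa
      exact ⟨t, by rw [ht]; ring⟩
    have hP2n : P ^ 2 ∣ n := by
      have := dvd_sub hsum hPa2
      simpa using this
    have hP2a : P ^ 2 ∣ a := by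
      obtain ⟨a1, ha1⟩ := hpa
      have hPb : P ∣ a1 * b := by
        have hP0 : P ≠ 0 := by linarith
        have : P * P ∣ P * (a1 * b) := by
          have : n = P * (a1 * b) := by rw [hn, ha1]; ring
          rw [this] at hP2n
          simpa [sq, pow_two] using hP2n
        exact (mul_dvd_mul_iff_left hP0).mp this
      have hPa1 : P ∣ a1 := (hpi.dvd_mul.mp hPb).resolve_right hpb
      obtain ⟨a2, ha2⟩ := hPa1
      exact ⟨a2, by rw [ha1, ha2]; ring⟩
    have haP2 : P ^ 2 ≤ a := Int.le_of_dvd ha hP2a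
    have hpan : n - 1 < P * a := by nlinarith
    have hΔlt : Δ < n - 1 := by nlinarith
    have hPdvd : P ∣ n - Δ := dvd_sub hA hdvd
    have hPle : P ≤ n - Δ := Int.le_of_dvd (by linarith) hPdvd
    have hfin : P ≤ 2 := by nlinarith [mul_le_mul_of_nonneg_left haP2 (by linarith : (0:ℤ) ≤ P - 1), sq_nonneg (n - P - Δ)]
    have hP2 : P = 2 := le_antisymm hfin hp2
    rw [hPdef] at hP2
    exact_mod_cast hP2
  · -- Case p ∣ n - 1 : contradiction
    exfalso
    obtain ⟨c, hc⟩ := hB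
    have hc0 : 0 ≤ c := by nlinarith
    have key : P * (c + P * c ^ 2 - a) = Δ ^ 2 := by
      linear_combination heq - (n + P * c) * hc
    have hdvd_ac : P ∣ a - c := by
      have h3 : P ∣ c + P * c ^ 2 - a := by
        have hP0 : P ≠ 0 := by linarith
        have : P * P ∣ P * (c + P * c ^ 2 - a) := by
          rw [key]; simpa [sq, pow_two] using hΔ2
        exact (mul_dvd_mul_iff_left hP0).mp this
      have h4 : P ∣ P * c ^ 2 := ⟨c ^ 2, rfl⟩
      have := dvd_sub h4 h3
      have h5 : P * c ^ 2 - (c + P * c ^ 2 - a) = a - c := by ring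
      rwa [h5] at this
    have hca : c < a := by nlinarith
    obtain ⟨k, hk⟩ := hdvd_ac
    have hk1 : 1 ≤ k := by nlinarith
    obtain ⟨d, hd⟩ := hdvd
    have hd1 : 1 ≤ d := by nlinarith
    have hcd : c ^ 2 - k = d ^ 2 := by
      have hP0 : (P : ℤ) ^ 2 ≠ 0 := by positivity
      have h6 : P ^ 2 * (c ^ 2 - k) = P ^ 2 * d ^ 2 := by
        linear_combination key + P * hk + (Δ + P * d) * hd
      exact mul_left_cancel₀ hP0 h6
    have hc2 : 2 ≤ c := by nlinarith
    have hdc : d ≤ c - 1 := by nlinarith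
    have hk2 : 2 * c - 1 ≤ k := by nlinarith
    have hint1 : P * (2 * c - 1) ≤ P * k := mul_le_mul_of_nonneg_left hk2 (by linarith)
    have hint2 : P * 2 ≤ P * c := mul_le_mul_of_nonneg_left hc2 (by linarith)
    linarith
end

section
/- Let p be a prime number and suppose there exist positive integers a, b, Δ such that ab(ab−1) − pa = Δ² and p divides ab − 1. If 1 ≤ a ≤ p and b ≥ 1, then a = 1 and b = p + 1 (and Δ = p). -/
/-- If `p` is a prime and positive integers `a, b, Δ` satisfy
`a*b*(a*b-1) - p*a = Δ^2` and `p ∣ a*b - 1`, with `1 ≤ a ≤ p` and `b ≥ 1`,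
then `a = 1`, `b = p + 1` and `Δ = p`. -/
theorem stmt_5 (p : ℕ) (hp : p.Prime) (a b Δ : ℤ)
    (ha : 1 ≤ a) (hap : a ≤ (p : ℤ)) (hb : 1 ≤ b) (hΔ : 0 < Δ)
    (heq : a * b * (a * b - 1) - (p : ℤ) * a = Δ ^ 2)
    (hdvd : (p : ℤ) ∣ (a * b - 1)) :
    a = 1 ∧ b = (p : ℤ) + 1 ∧ Δ = (p : ℤ) := by
  obtain ⟨k, hk⟩ := hdvd
  have hp2 : (2:ℤ) ≤ (p:ℤ) := by exact_mod_cast hp.two_le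
  have hab1 : 1 ≤ a * b := by nlinarith
  have hk0 : 0 ≤ k := by nlinarith
  have hDsq : Δ ^ 2 = (p:ℤ) * ((p:ℤ) * k ^ 2 + k - a) := by
    linear_combination -heq + (a * b + (p:ℤ) * k) * hk
  have hpz : Prime ((p:ℤ)) := Nat.prime_iff_prime_int.mp hp
  have hpd : (p:ℤ) ∣ Δ := hpz.dvd_of_dvd_pow ⟨_, hDsq⟩
  obtain ⟨m, hm⟩ := hpd
  have hm1 : 1 ≤ m := by nlinarith
  have hpne : (p:ℤ) ≠ 0 := by linarith
  have hkey : (p:ℤ) * m ^ 2 = (p:ℤ) * k ^ 2 + k - a := by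
    have h2 : (p:ℤ) * ((p:ℤ) * m ^ 2) = (p:ℤ) * ((p:ℤ) * k ^ 2 + k - a) := by
      rw [← hDsq, hm]; ring
    exact mul_left_cancel₀ hpne h2
  have hk1 : 1 ≤ k := by
    rcases eq_or_lt_of_le hk0 with h | h
    · exfalso
      rw [← h] at hkey
      nlinarith [sq_nonneg (m - 1)]
    · linarith
  have hmk : m = k := by
    by_contra hne
    rcases lt_or_gt_of_ne hne with h | h
    · have h' : m ≤ k - 1 := by omega
      have hsq : m ^ 2 ≤ (k - 1) ^ 2 := by nlinarith
      nlinarith [mul_le_mul_of_nonneg_left hsq (show (0:ℤ) ≤ (p:ℤ) by linarith),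
        mul_le_mul_of_nonneg_left hk1 (show (0:ℤ) ≤ (p:ℤ) by linarith)]
    · have h' : k + 1 ≤ m := by omega
      have hsq : (k + 1) ^ 2 ≤ m ^ 2 := by nlinarith
      nlinarith [mul_le_mul_of_nonneg_left hsq (show (0:ℤ) ≤ (p:ℤ) by linarith),
        mul_le_mul_of_nonneg_left hk1 (show (0:ℤ) ≤ (p:ℤ) by linarith)]
  have hak : a = k := by
    rw [hmk] at hkey; linarith
  have hmul : a * (b - (p:ℤ)) = 1 := by
    have : a * b - 1 = (p:ℤ) * a := by rw [hk, hak]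
    linear_combination this
  have ha1 : a = 1 := by
    have hd : a ∣ 1 := ⟨_, hmul.symm⟩
    have := Int.le_of_dvd one_pos hd
    omega
  refine ⟨ha1, ?_, ?_⟩
  · have : b - (p:ℤ) = 1 := by rw [ha1] at hmul; linarith
    linarith
  · have : k = 1 := by rw [← hak, ha1]
    rw [hm, hmk, this]; ring
end

section
/- Let p ≥ 2 be a prime and suppose positive integers x, y, z satisfy (4x − p)yz = x(y + z). Then x ≤ p/2, i.e. 2x ≤ p. -/
/-- If `p ≥ 2` is a prime and positive integers `x, y, z` satisfy
`(4x - p) y z = x (y + z)`, then `2x ≤ p`. -/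
theorem stmt_7 (p : ℕ) (hp : p.Prime) (hp2 : 2 ≤ p) (x y z : ℤ)
    (hx : 0 < x) (hy : 0 < y) (hz : 0 < z)
    (heq : (4 * x - (p : ℤ)) * y * z = x * (y + z)) :
    2 * x ≤ (p : ℤ) := by
  have hy1 : 1 ≤ y := hy
  have hz1 : 1 ≤ z := hz
  have key : ((p : ℤ) - 2 * x) * (y * z) ≥ 0 := by
    nlinarith [mul_nonneg (mul_nonneg hx.le (sub_nonneg.2 hy1)) (sub_nonneg.2 hz1),
      mul_nonneg hx.le (mul_nonneg (sub_nonneg.2 hy1) (sub_nonneg.2 hz1))]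
  nlinarith [mul_pos hy hz]
end

section
/- Let p ≥ 2 be a prime and suppose there exist positive integers x, y, z such that (4x − p)yz = x(y + z). Then p does not divide yz. -/
/-- If `p ≥ 2` is a prime and positive integers `x, y, z` satisfy
`(4x - p) y z = x (y + z)`, then `p` does not divide `yz`. -/
theorem stmt_8 (p : ℕ) (hp : p.Prime) (hp2 : 2 ≤ p) (x y z : ℤ)
    (hx : 0 < x) (hy : 0 < y) (hz : 0 < z)
    (heq : (4 * x - (p : ℤ)) * y * z = x * (y + z)) :
    ¬ (p : ℤ) ∣ y * z := by
  intro hdvd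
  have hpZ : Prime ((p : ℤ)) := Nat.prime_iff_prime_int.mp hp
  have hp2' : (2 : ℤ) ≤ (p : ℤ):= by exact_mod_cast hp2
  have hyz : 0 < y * z := mul_pos hy hz
  have hxyz : 0 < x * (y + z) := mul_pos hx (add_pos hy hz)
  -- 4x > p
  have h4x : (p : ℤ) < 4 * x := by
    by_contra h
    push_neg at h
    have h1 : (4 * x - (p : ℤ)) * y * z ≤ 0 := by
      have : (4 * x - (p : ℤ)) ≤ 0 := by linarith
      have := mul_nonpos_of_nonpos_of_nonneg
        (mul_nonpos_of_nonpos_of_nonneg this hy.le) hz.le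
      linarith
    linarith [heq ▸ h1]
  -- p does not divide x
  have hpx : ¬ (p : ℤ) ∣ x := by
    intro hd
    have hpx' : (p : ℤ) ≤ x := Int.le_of_dvd hx hd
    have h1 : (p : ℤ) * (y * z) ≤ x * (y * z) := mul_le_mul_of_nonneg_right hpx' hyz.le
    have h2 : x * y ≤ x * y * z := le_mul_of_one_le_right (mul_pos hx hy).le hz
    have h3 : x * z ≤ x * z * y := le_mul_of_one_le_right (mul_pos hx hz).le hy
    nlinarith [mul_pos (mul_pos hx hy) hz]
  -- p ∣ x*(y+z)
  have hd1 : (p : ℤ) ∣ x * (y + z) := by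
    have h : x * (y + z) = 4 * x * (y * z) - (p : ℤ) * (y * z) := by
      rw [← heq]; ring
    rw [h]
    exact dvd_sub (Dvd.dvd.mul_left hdvd _) (Dvd.dvd.mul_right dvd_rfl _)
  have hdyz : (p : ℤ) ∣ y + z := (hpZ.dvd_mul.1 hd1).resolve_left hpx
  have hdy : (p : ℤ) ∣ y ∧ (p : ℤ) ∣ z := by
    rcases hpZ.dvd_mul.1 hdvd with h | h
    · exact ⟨h, by have := dvd_sub hdyz h; simpa using this⟩
    · exact ⟨by have := dvd_sub hdyz h; simpa using this, h⟩
  have hyp : (p : ℤ) ≤ y := Int.le_of_dvd hy hdy.1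
  have hzp : (p : ℤ) ≤ z := Int.le_of_dvd hz hdy.2
  -- key inequality: p*(y+z) ≤ 2*(y*z)
  have key1 : (p : ℤ) * (y + z) ≤ 2 * (y * z) := by
    have h1 : (p : ℤ) * z ≤ y * z := mul_le_mul_of_nonneg_right hyp hz.le
    have h2 : (p : ℤ) * y ≤ z * y := mul_le_mul_of_nonneg_right hzp hy.le
    nlinarith
  -- hence p*(4x-p) ≤ 2x
  have key2 : (p : ℤ) * (4 * x - (p : ℤ)) ≤ 2 * x := by
    have h1 : (p : ℤ) * (4 * x - (p : ℤ)) * (y * z) ≤ 2 * x * (y * z) := by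
      calc (p : ℤ) * (4 * x - (p : ℤ)) * (y * z)
          = (p : ℤ) * ((4 * x - (p : ℤ)) * y * z) := by ring
        _ = (p : ℤ) * (x * (y + z)) := by rw [heq]
        _ = x * ((p : ℤ) * (y + z)) := by ring
        _ ≤ x * (2 * (y * z)) := mul_le_mul_of_nonneg_left key1 hx.le
        _ = 2 * x * (y * z) := by ring
    exact le_of_mul_le_mul_right h1 hyz
  -- final contradiction using 4x ≥ p+1 and p ≥ 2
  have h4x1 : (p : ℤ) + 1 ≤ 4 * x := h4x
  nlinarith [mul_le_mul_of_nonneg_right h4x1 (by linarith : (0:ℤ) ≤ 4 * (p:ℤ) - 2)]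
end

section
/- For every positive integer n, the Jacobi symbol of n modulo 4n + 1 equals 1, i.e. (n/(4n+1)) = 1. -/
/-- For every positive integer `n`, the Jacobi symbol `(n / (4n+1))` equals `1`. -/
theorem stmt_9 (n : ℕ) (hn : 0 < n) : jacobiSym (n : ℤ) (4 * n + 1) = 1 := by
  have hodd : Odd (4 * n + 1) := ⟨2 * n, by ring⟩
  have hg : Int.gcd 2 (4 * n + 1) = 1 := by
    simp [Int.gcd]
    exact ⟨2 * n, by push_cast; ring⟩
  have key : jacobiSym (4 * (n : ℤ)) (4 * n + 1) = jacobiSym (-1) (4 * n + 1) := by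
    apply jacobiSym.mod_left'
    rw [Int.emod_eq_emod_iff_emod_sub_eq_zero]
    have : (4 * (n : ℤ) - -1) = ((4 * n + 1 : ℕ) : ℤ) := by push_cast; ring
    rw [this, Int.emod_self]
  have h4 : jacobiSym (4 * (n : ℤ)) (4 * n + 1) = jacobiSym (n : ℤ) (4 * n + 1) := by
    rw [jacobiSym.mul_left, show (4 : ℤ) = 2 ^ 2 by norm_num, jacobiSym.sq_one' hg, one_mul]
  have hneg : jacobiSym (-1) (4 * n + 1) = 1 := by
    rw [jacobiSym.at_neg_one hodd]
    exact ZMod.χ₄_nat_one_mod_four (by omega)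
  rw [← h4, key, hneg]
end

section
/- For every positive integer n ≥ 1 with 4n − 1 > 1, the Jacobi symbol of n modulo 4n − 1 equals 1, i.e. (n/(4n−1)) = 1. -/
/-- For every positive integer `n ≥ 1` with `4n - 1 > 1`, the Jacobi symbol
`(n / (4n-1))` equals `1`. -/
theorem stmt_10 (n : ℕ) (hn : 1 ≤ n) (h : 1 < 4 * n - 1) :
    jacobiSym (n : ℤ) (4 * n - 1) = 1 := by
  have hb2 : (4 * n - 1) % 2 = 1 := by omega
  have h4 : (4 * (n : ℤ)) % 4 = 0 := by omega
  have key : jacobiSym (4 * (n : ℤ) / 4) (4 * n - 1) = jacobiSym (4 * (n : ℤ)) (4 * n - 1) :=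
    jacobiSym.div_four_left h4 hb2
  have hdiv : (4 * (n : ℤ)) / 4 = (n : ℤ) := by omega
  rw [hdiv] at key
  rw [key, jacobiSym.mod_left]
  have hmod : (4 * (n : ℤ)) % ((4 * n - 1 : ℕ) : ℤ) = 1 := by
    have : ((4 * n - 1 : ℕ) : ℤ) = 4 * n - 1 := by
      push_cast [Nat.cast_sub (by omega : 1 ≤ 4 * n)]; ring
    rw [this]
    have h1 : (1 : ℤ) < 4 * (n : ℤ) - 1 := by omega
    calc (4 * (n : ℤ)) % (4 * (n : ℤ) - 1)
        = (1 + (4 * (n : ℤ) - 1) * 1) % (4 * (n : ℤ) - 1) := by ring_nf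
      _ = 1 % (4 * (n : ℤ) - 1) := by rw [Int.add_mul_emod_self_left]
      _ = 1 := Int.emod_eq_of_lt (by norm_num) h1
  rw [hmod, jacobiSym.one_left]
end

section
/- Let p > 2 be a prime number and suppose positive integers x, y, z satisfy (4x − p)yz = x(y + z). If p ≡ 1 (mod 4), then the Legendre symbols satisfy (yz/p) = ((y+z)/p) = −1. -/
/-!
Modulo `p` the integer `x` is invertible (`0 < 2x ≤ p`), so the equation becomes
`4yz ≡ y + z`; then `yz (4y - 1) ≡ y²` and `(y + z)(4y - 1) ≡ (2y)²`, so both symbols equal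
`((4y - 1)/p)`. Writing `yz = xw` gives `pw + (2y)² = (4y - 1)(y + z)` and `w ∣ y²`, hence
`J(pw | 4y - 1) = J(-1 | 4y - 1) = -1`, while `J(w | 4y - 1) = 1` because `w` is a product of
two divisors of `y` and every divisor `d` of `y` has
`J(d | 4y - 1) = J(d | 4d - 1) = J(4d | 4d - 1) = 1`. Reciprocity for `p ≡ 1 (mod 4)` turns
`J(p | 4y - 1) = -1` into `((4y - 1)/p) = -1`.
-/

open NumberTheorySymbols

theorem jacobiSym_four_mul_sub_one_self {d : ℕ} (hd : 0 < d) : J(d | 4 * d - 1) = 1 := by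
  have hodd : Odd (4 * d - 1) := ⟨2 * d - 1, by omega⟩
  have hcast : ((4 * d - 1 : ℕ) : ℤ) = 4 * d - 1 := by omega
  have h4d : J(4 * d | 4 * d - 1) = J(1 | 4 * d - 1) :=
    jacobiSym.mod_left' <| Int.modEq_iff_dvd.mpr ⟨-1, by rw [hcast]; ring⟩
  rwa [jacobiSym.mul_left, jacobiSym.at_four hodd, one_mul, jacobiSym.one_left] at h4d

theorem jacobiSym_four_mul_sub_one_of_dvd {d n : ℕ} (hn : 0 < n) (hdn : d ∣ n) :
    J(d | 4 * n - 1) = 1 := by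
  obtain ⟨k, rfl⟩ := hdn
  have hd : 0 < d := Nat.pos_of_mul_pos_right hn
  obtain ⟨k, rfl⟩ : ∃ k', k = k' + 1 := ⟨k - 1, by have := Nat.pos_of_mul_pos_left hn; omega⟩
  have hmod : (4 * (d * (k + 1)) - 1) % (4 * d) = 4 * d - 1 := by
    rw [show 4 * (d * (k + 1)) - 1 = 4 * d - 1 + 4 * d * k by ring_nf; omega,
      Nat.add_mul_mod_self_left, Nat.mod_eq_of_lt (by omega)]
  rw [jacobiSym.mod_right' d ⟨2 * (d * (k + 1)) - 1, by omega⟩, hmod,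
    jacobiSym_four_mul_sub_one_self hd]

theorem jacobiSym_four_mul_sub_one_of_dvd_sq {d n : ℕ} (hn : 0 < n) (hdn : d ∣ n ^ 2) :
    J(d | 4 * n - 1) = 1 := by
  obtain ⟨d₁, d₂, h₁, h₂, rfl⟩ := Nat.dvd_mul.mp (sq n ▸ hdn)
  rw [Nat.cast_mul, jacobiSym.mul_left, jacobiSym_four_mul_sub_one_of_dvd hn h₁,
    jacobiSym_four_mul_sub_one_of_dvd hn h₂, one_mul]

theorem jacobiSym_four_mul_sub_one_eq_neg_one {p n w : ℕ} (hn : 0 < n) (hw : w ∣ n ^ 2)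
    (h : 4 * n - 1 ∣ p * w + (2 * n) ^ 2) : J(p | 4 * n - 1) = -1 := by
  have hQ : ((4 * n - 1 : ℕ) : ℤ) = 4 * n - 1 := by omega
  have hodd : Odd (4 * n - 1) := ⟨2 * n - 1, by omega⟩
  have hcop : Int.gcd (2 * n) (4 * n - 1 : ℕ) = 1 :=
    Int.isCoprime_iff_gcd_eq_one.mp ⟨2, -1, by rw [hQ]; ring⟩
  have hpw : J(p * w | 4 * n - 1) = J(-(2 * n) ^ 2 | 4 * n - 1) := by
    refine jacobiSym.mod_left' (Int.ModEq.symm (Int.modEq_iff_dvd.mpr ?_))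
    rw [sub_neg_eq_add]
    exact_mod_cast h
  rwa [jacobiSym.mul_left, jacobiSym.neg _ hodd, jacobiSym.sq_one' hcop, mul_one,
    ZMod.χ₄_nat_three_mod_four (by omega), jacobiSym_four_mul_sub_one_of_dvd_sq hn hw,
    mul_one] at hpw

theorem legendreSym_four_mul_sub_one_eq_neg_one {p : ℕ} [Fact p.Prime] (hp : p % 4 = 1)
    {w y : ℤ} (hy : 0 < y) (hw : 0 < w) (hwy : w ∣ y ^ 2)
    (h : 4 * y - 1 ∣ p * w + (2 * y) ^ 2) : legendreSym p (4 * y - 1) = -1 := by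
  lift y to ℕ using hy.le
  lift w to ℕ using hw.le
  have hQ : ((4 * y - 1 : ℕ) : ℤ) = 4 * y - 1 := by omega
  rw [jacobiSym.legendreSym.to_jacobiSym, ← hQ,
    ← jacobiSym.quadratic_reciprocity_one_mod_four hp ⟨2 * y - 1, by omega⟩]
  refine jacobiSym_four_mul_sub_one_eq_neg_one (by omega) (by exact_mod_cast hwy) ?_
  rw [← Int.natCast_dvd_natCast]
  push_cast [hQ]
  exact h

theorem legendreSym_eq_of_dvd_mul_sub_sq {p : ℕ} [Fact p.Prime] {a b c : ℤ}
    (hc : ¬ (p : ℤ) ∣ c) (h : (p : ℤ) ∣ a * b - c ^ 2) : legendreSym p a = legendreSym p b := by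
  have hmod : c ^ 2 % p = a * b % p := Int.modEq_iff_dvd.mpr h
  have hab : legendreSym p a * legendreSym p b = 1 := by
    rw [← legendreSym.mul, legendreSym.mod, ← hmod, ← legendreSym.mod,
      legendreSym.sq_one' p ((ZMod.intCast_zmod_eq_zero_iff_dvd c p).not.mpr hc)]
  rcases Int.eq_one_or_neg_one_of_mul_eq_one' hab with ⟨ha, hb⟩ | ⟨ha, hb⟩ <;> rw [ha, hb]

/-- The equation is `4 / p = 1 / x + 1 / (p y) + 1 / (p z)` cleared of denominators. -/
structure IsErdosStrausTriple (p : ℕ) (x y z : ℤ) : Prop where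
  x_pos : 0 < x
  y_pos : 0 < y
  z_pos : 0 < z
  eq : (4 * x - p) * y * z = x * (y + z)

namespace IsErdosStrausTriple

variable {p : ℕ} {x y z : ℤ}

theorem four_mul_sub_pos (h : IsErdosStrausTriple p x y z) : 0 < 4 * x - p := by
  have := h.x_pos; have := h.y_pos; have := h.z_pos
  have hpos : 0 < (4 * x - p) * (y * z) := by
    rw [← mul_assoc, h.eq]; positivity
  exact pos_of_mul_pos_left hpos (by positivity)

theorem two_mul_le (h : IsErdosStrausTriple p x y z) : 2 * x ≤ p := by
  have := h.x_pos; have := h.y_pos; have := h.z_pos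
  have hyz : y + z ≤ 2 * (y * z) := by nlinarith
  have : (4 * x - p) * (y * z) ≤ 2 * x * (y * z) := by
    rw [← mul_assoc, h.eq]; nlinarith
  nlinarith [le_of_mul_le_mul_right this (by positivity)]

theorem not_dvd_x (h : IsErdosStrausTriple p x y z) : ¬ (p : ℤ) ∣ x := fun hpx ↦ by
  linarith [Int.le_of_dvd h.x_pos hpx, h.two_mul_le, h.x_pos]

theorem dvd_four_mul_mul_sub_sub (h : IsErdosStrausTriple p x y z) (hp : p.Prime) :
    (p : ℤ) ∣ 4 * y * z - y - z := by
  have hp' := Nat.prime_iff_prime_int.mp hp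
  refine (hp'.dvd_or_dvd ⟨y * z, ?_⟩).resolve_left h.not_dvd_x
  linear_combination h.eq

theorem not_dvd_y (h : IsErdosStrausTriple p x y z) (hp : p.Prime) : ¬ (p : ℤ) ∣ y := by
  intro hpy
  have hpz : (p : ℤ) ∣ z := by
    have := (hpy.mul_left (4 * z) |>.sub hpy).sub (h.dvd_four_mul_mul_sub_sub hp)
    rwa [show 4 * z * y - y - (4 * y * z - y - z) = z by ring] at this
  -- `p ≤ y, z` gives `p (y + z) ≤ 2yz`, hence `p (4x - p) ≤ 2x`, impossible as `4x - p ≥ 1`.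
  have := h.x_pos; have := h.y_pos; have := h.z_pos; have := h.four_mul_sub_pos
  have hp2 : (2 : ℤ) ≤ p := by exact_mod_cast hp.two_le
  have hpy' := Int.le_of_dvd h.y_pos hpy
  have hpz' := Int.le_of_dvd h.z_pos hpz
  have hsum : p * (y + z) ≤ 2 * (y * z) := by nlinarith
  have : p * (4 * x - p) * (y * z) ≤ 2 * x * (y * z) := by
    rw [mul_assoc, ← mul_assoc (4 * x - p), h.eq]; nlinarith
  have := le_of_mul_le_mul_right this (by positivity)
  nlinarith

theorem dvd_y_mul_z (h : IsErdosStrausTriple p x y z) (hp : p.Prime) : x ∣ y * z := by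
  have hcop : IsCoprime x p :=
    ((Nat.prime_iff_prime_int.mp hp).coprime_iff_not_dvd.mpr h.not_dvd_x).symm
  exact hcop.dvd_of_dvd_mul_right ⟨4 * y * z - y - z, by linear_combination -h.eq⟩

theorem legendreSym_four_mul_y_sub_one (h : IsErdosStrausTriple p x y z) [Fact p.Prime]
    (hp : p % 4 = 1) : legendreSym p (4 * y - 1) = -1 := by
  obtain ⟨w, hw⟩ := h.dvd_y_mul_z Fact.out
  have hpw : p * w = 4 * y * z - y - z := by
    apply mul_left_cancel₀ h.x_pos.ne'
    linear_combination -h.eq - p * hw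
  refine legendreSym_four_mul_sub_one_eq_neg_one hp h.y_pos
    (pos_of_mul_pos_right (hw ▸ mul_pos h.y_pos h.z_pos) h.x_pos.le)
    ⟨(4 * x - p) * y - x, ?_⟩ ⟨y + z, by linear_combination hpw⟩
  apply mul_left_cancel₀ h.x_pos.ne'
  linear_combination (-y) * h.eq + ((4 * x - p) * y - x) * hw

end IsErdosStrausTriple

/-- Let `p > 2` be a prime with `p ≡ 1 (mod 4)` and suppose positive integers
`x, y, z` satisfy `(4x - p) y z = x (y + z)`. Then `(yz/p) = ((y+z)/p) = -1`. -/
theorem stmt_11 (p : ℕ) [Fact p.Prime] (hp2 : 2 < p) (hp1 : p % 4 = 1)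
    (x y z : ℤ) (hx : 0 < x) (hy : 0 < y) (hz : 0 < z)
    (heq : (4 * x - (p : ℤ)) * y * z = x * (y + z)) :
    legendreSym p (y * z) = -1 ∧ legendreSym p (y + z) = -1 := by
  have h : IsErdosStrausTriple p x y z := ⟨hx, hy, hz, heq⟩
  have hp : p.Prime := Fact.out
  have hdvd := h.dvd_four_mul_mul_sub_sub hp
  have hpy := h.not_dvd_y hp
  have hp2y : ¬ (p : ℤ) ∣ 2 * y := fun hd ↦
    ((Nat.prime_iff_prime_int.mp hp).dvd_or_dvd hd).elim
      (fun h2 ↦ by have := Int.le_of_dvd two_pos h2; omega) hpy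
  rw [← h.legendreSym_four_mul_y_sub_one hp1]
  constructor
  · refine legendreSym_eq_of_dvd_mul_sub_sq hpy ?_
    rw [show y * z * (4 * y - 1) - y ^ 2 = y * (4 * y * z - y - z) by ring]
    exact hdvd.mul_left y
  · refine legendreSym_eq_of_dvd_mul_sub_sq hp2y ?_
    rwa [show (y + z) * (4 * y - 1) - (2 * y) ^ 2 = 4 * y * z - y - z by ring]
end

section
/- Let p be a prime with p ≡ 1 (mod 4) and suppose there exist positive integers a, b, Δ with b ≡ 3 (mod 4) such that ab(ab−1) − pa = Δ² and p + b ≡ 0 (mod 4). Then the Legendre symbols satisfy (ab/p) = ((ab−1)/p) = −1. -/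
/-!
Put `K = ab² - b - p`, so that the equation reads `aK = Δ²` and `K + p = b(ab - 1)`. Size
estimates show that `p` divides neither `ab` nor `ab - 1`; since `ab(ab - 1) ≡ Δ² (mod p)`, the
two Legendre symbols are then equal, and it suffices to show `(ab/p) = -1`.

Write `a = g u²`, `K = g v²`. Reciprocity gives `(a/p) = (g/p)` and
`(b/p) = (p/b) = (-K/b) = -(g/b)`, because `b ≡ 3 (mod 4)`. Moreover `b + p = g((ub)² - v²)`:
reciprocity turns `(m/p)` into `(m/b)` for the odd part `m` of `g`, and since a difference of
squares is never `2 (mod 4)`, the power of `2` in `g` is even unless `8 ∣ b + p`, in which case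
`(2/p) = (2/b)`. So `(g/p) = (g/b)` and `(ab/p) = -(g/b)² = -1`.
-/

open NumberTheorySymbols

theorem Prime.exists_eq_mul_sq_of_mul_eq_sq {α : Type*} [CommMonoidWithZero α]
    [IsCancelMulZero α] {p c d : α} (hp : Prime p) (h : p * c = d ^ 2) :
    ∃ δ, c = p * δ ^ 2 := by
  obtain ⟨δ, rfl⟩ := hp.dvd_of_dvd_pow (Dvd.intro c h)
  exact ⟨δ, mul_left_cancel₀ hp.ne_zero (by rw [h, mul_pow, sq p, mul_assoc])⟩

theorem Nat.exists_eq_mul_sq_of_mul_eq_sq {x y z : ℕ} (hx : x ≠ 0) (h : x * y = z ^ 2) :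
    ∃ g u v : ℕ, x = g * u ^ 2 ∧ y = g * v ^ 2 := by
  obtain ⟨g, x', y', hg, hcop, rfl, rfl⟩ :=
    Nat.exists_coprime' (Nat.gcd_pos_of_pos_left y (Nat.pos_of_ne_zero hx))
  obtain ⟨w, rfl⟩ : g ∣ z := (Nat.pow_dvd_pow_iff two_ne_zero).mp
    ⟨x' * y', by rw [← h]; ring⟩
  have hxy : x' * y' = w ^ 2 :=
    Nat.eq_of_mul_eq_mul_left (pow_pos hg 2) (by rw [← mul_pow, ← h]; ring)
  obtain ⟨u, hu⟩ := exists_eq_pow_of_mul_eq_pow (Nat.isUnit_iff.mpr hcop) hxy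
  obtain ⟨v, hv⟩ :=
    exists_eq_pow_of_mul_eq_pow (Nat.isUnit_iff.mpr hcop.symm) ((mul_comm y' x').trans hxy)
  exact ⟨g, u, v, by rw [hu, mul_comm], by rw [hv, mul_comm]⟩

theorem Int.four_dvd_sq_sub_sq_of_even {x y : ℤ} (h : Even (x ^ 2 - y ^ 2)) :
    4 ∣ x ^ 2 - y ^ 2 := by
  have hxy : Even x ↔ Even y := by simpa [parity_simps] using h
  obtain ⟨r, hr⟩ : Even (x - y) := by simp [parity_simps, hxy]
  obtain ⟨s, hs⟩ : Even (x + y) := by simp [parity_simps, hxy]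
  exact ⟨r * s, by linear_combination (x + y) * hr + (r + r) * hs⟩

theorem even_or_eight_dvd_of_four_dvd {N x y : ℤ} {e m : ℕ} (hm : Odd m)
    (hN : N = 2 ^ e * m * (x ^ 2 - y ^ 2)) (h4 : 4 ∣ N) : Even e ∨ 8 ∣ N := by
  refine (Nat.even_or_odd e).imp_right fun he => ?_
  obtain rfl | h3 : e = 1 ∨ 3 ≤ e := by obtain ⟨k, rfl⟩ := he; omega
  · have hw : Even (m * (x ^ 2 - y ^ 2) : ℤ) := even_iff_two_dvd.mpr <|
      (mul_dvd_mul_iff_left two_ne_zero).mp (by rw [hN, mul_assoc] at h4; simpa using h4)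
    have h4w := Int.four_dvd_sq_sub_sq_of_even <|
      (Int.even_mul.mp hw).resolve_left (Int.not_even_iff_odd.mpr hm.natCast)
    rw [hN, pow_one, mul_assoc]
    exact mul_dvd_mul_left 2 (h4w.mul_left _)
  · rw [hN, mul_assoc]
    exact (pow_dvd_pow 2 h3).mul_right _

namespace jacobiSym

theorem sq_eq_one_of_ne_zero {x : ℤ} {n : ℕ} (h : J(x | n) ≠ 0) : J(x | n) ^ 2 = 1 := by
  rcases trichotomy x n with hx | hx | hx <;> simp_all

theorem mul_sq_eq_of_ne_zero {x y : ℤ} {n : ℕ} (h : J(x * y ^ 2 | n) ≠ 0) :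
    J(x * y ^ 2 | n) = J(x | n) := by
  rw [mul_left, pow_left] at h ⊢
  rw [sq_eq_one_of_ne_zero ((pow_ne_zero_iff two_ne_zero).mp (right_ne_zero_of_mul h)), mul_one]

theorem ne_zero_of_not_dvd {p : ℕ} [Fact p.Prime] {x : ℤ} (h : ¬ (p : ℤ) ∣ x) :
    J(x | p) ≠ 0 := by
  rwa [← legendreSym.to_jacobiSym, Ne, legendreSym.eq_zero_iff, ZMod.intCast_zmod_eq_zero_iff_dvd]

theorem at_two_pow_of_even {n e : ℕ} (hn : Odd n) (he : Even e) : J(2 | n) ^ e = 1 := by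
  obtain ⟨k, rfl⟩ := he
  rw [← two_mul, pow_mul, ← pow_left, show (2 : ℤ) ^ 2 = 4 by norm_num, at_four hn, one_pow]

theorem at_two_eq_of_eight_dvd_add {p b : ℕ} (hp : Odd p) (hb : Odd b) (h8 : 8 ∣ b + p) :
    J(2 | p) = J(2 | b) := by
  rw [mod_right 2 hp, mod_right 2 hb]
  have : p % 8 = 1 ∧ b % 8 = 7 ∨ p % 8 = 3 ∧ b % 8 = 5 ∨ p % 8 = 5 ∧ b % 8 = 3 ∨
      p % 8 = 7 ∧ b % 8 = 1 := by
    obtain ⟨_, _⟩ := hp; obtain ⟨_, _⟩ := hb; omega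
  rcases this with ⟨hp8, hb8⟩ | ⟨hp8, hb8⟩ | ⟨hp8, hb8⟩ | ⟨hp8, hb8⟩ <;>
    norm_num [hp8, hb8]

theorem neg_eq_of_mod_four_eq_three {m n : ℕ} (hm : Odd m) (hn : n % 4 = 3) :
    J(-n | m) = J(m | n) := by
  rw [neg_eq_neg_one_mul, mul_left, at_neg_one hm]
  rcases Nat.odd_mod_four_iff.mp (Nat.odd_iff.mp hm) with h | h
  · rw [ZMod.χ₄_nat_one_mod_four h, one_mul,
      quadratic_reciprocity_one_mod_four' (Nat.odd_iff.mpr (by omega)) h]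
  · rw [ZMod.χ₄_nat_three_mod_four h, quadratic_reciprocity_three_mod_four hn h, neg_one_mul,
      neg_neg]

theorem eq_one_of_modEq_sq {x z : ℤ} {n : ℕ} (h : x ≡ z ^ 2 [ZMOD n]) (h0 : J(x | n) ≠ 0) :
    J(x | n) = 1 := by
  rw [mod_left' h, pow_left] at h0 ⊢
  exact sq_eq_one_of_ne_zero ((pow_ne_zero_iff two_ne_zero).mp h0)

variable {p b : ℕ}

theorem eq_of_dvd_add (hp : p % 4 = 1) (hb : b % 4 = 3) {m : ℕ} (hm : Odd m)
    (hmd : m ∣ b + p) : J(m | p) = J(m | b) := by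
  rw [← quadratic_reciprocity_one_mod_four hp hm, ← neg_eq_of_mod_four_eq_three hm hb]
  refine mod_left' (Int.modEq_iff_dvd.mpr ?_)
  rw [show (-b - p : ℤ) = -((b + p : ℕ) : ℤ) by push_cast; ring, dvd_neg]
  exact Int.natCast_dvd_natCast.mpr hmd

theorem eq_neg_of_dvd_add (hp : p % 4 = 1) (hb : b % 4 = 3) {K : ℤ} (h : (b : ℤ) ∣ K + p) :
    J(b | p) = -J(K | b) := by
  have hbo : Odd b := Nat.odd_iff.mpr (by omega)
  have hmod : (p : ℤ) ≡ -K [ZMOD b] :=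
    Int.modEq_iff_dvd.mpr (by rw [show -K - p = -(K + p) by ring, dvd_neg]; exact h)
  rw [← quadratic_reciprocity_one_mod_four hp hbo, mod_left' hmod, neg_eq_neg_one_mul, mul_left,
    at_neg_one hbo, ZMod.χ₄_nat_three_mod_four hb, neg_one_mul]

theorem eq_of_add_eq_mul_sq_sub_sq (hp : p % 4 = 1) (hb : b % 4 = 3) {g : ℕ} {x y : ℤ}
    (h : (b + p : ℤ) = g * (x ^ 2 - y ^ 2)) : J(g | p) = J(g | b) := by
  have hg : g ≠ 0 := by rintro rfl; simp at h; omega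
  obtain ⟨e, m, hm, rfl⟩ := Nat.exists_eq_two_pow_mul_odd hg
  have hN : ((b + p : ℕ) : ℤ) = 2 ^ e * m * (x ^ 2 - y ^ 2) := by push_cast at h ⊢; rw [h]
  have hmd : m ∣ b + p :=
    Int.natCast_dvd_natCast.mp ⟨2 ^ e * (x ^ 2 - y ^ 2), by rw [hN]; ring⟩
  have h2 : J(2 | p) ^ e = J(2 | b) ^ e := by
    have hpo : Odd p := Nat.odd_iff.mpr (by omega)
    have hbo : Odd b := Nat.odd_iff.mpr (by omega)
    rcases even_or_eight_dvd_of_four_dvd hm hN (by omega) with he | h8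
    · rw [at_two_pow_of_even hpo he, at_two_pow_of_even hbo he]
    · rw [at_two_eq_of_eight_dvd_add hpo hbo (by exact_mod_cast h8)]
  push_cast
  rw [mul_left, mul_left, pow_left, pow_left, h2, eq_of_dvd_add hp hb hm hmd]

theorem mul_eq_neg_one_of_mul_eq_sq [Fact p.Prime] (hp : p % 4 = 1) (hb : b % 4 = 3)
    {a K D : ℕ} (hpab : ¬ (p : ℤ) ∣ a * b) (hK : K + b + p = a * b ^ 2)
    (hsq : a * K = D ^ 2) :
    J(a * b | p) = -1 := by
  have hpa : ¬ (p : ℤ) ∣ a := fun h => hpab (h.mul_right _)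
  have hpb : ¬ (p : ℤ) ∣ b := fun h => hpab (h.mul_left _)
  have ha : a ≠ 0 := by rintro rfl; simp at hpab
  obtain ⟨g, u, v, rfl, rfl⟩ := Nat.exists_eq_mul_sq_of_mul_eq_sq ha hsq
  have hKz : (g * v ^ 2 + b + p : ℤ) = g * u ^ 2 * b ^ 2 := by exact_mod_cast hK
  have hKb : J(b | p) = -J(g * v ^ 2 | b) :=
    eq_neg_of_dvd_add hp hb ⟨g * u ^ 2 * b - 1, by linear_combination hKz⟩
  have hb0 : J(b | p) ≠ 0 := ne_zero_of_not_dvd hpb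
  have hgb : J(g * v ^ 2 | b) = J(g | b) :=
    mul_sq_eq_of_ne_zero (by rwa [hKb, neg_ne_zero] at hb0)
  have hgp : J(g * u ^ 2 | p) = J(g | p) :=
    mul_sq_eq_of_ne_zero (ne_zero_of_not_dvd (by exact_mod_cast hpa))
  have hgpb : J(g | p) = J(g | b) :=
    eq_of_add_eq_mul_sq_sub_sq hp hb (x := u * b) (y := v) (by linear_combination hKz)
  have hgb0 : J(g | b) ≠ 0 := by rwa [hKb, neg_ne_zero, hgb] at hb0
  push_cast
  rw [mul_left, hgp, hKb, hgb, hgpb, mul_neg, ← sq, sq_eq_one_of_ne_zero hgb0]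

end jacobiSym

theorem not_dvd_mul_of_eq_sq {p : ℕ} (hp : p.Prime) {a b Δ : ℤ} (ha : 0 < a) (hb : 3 ≤ b)
    (h : a * b * (a * b - 1) - p * a = Δ ^ 2) : ¬ (p : ℤ) ∣ a * b := by
  rintro ⟨m, hm⟩
  have hp2 : (2 : ℤ) ≤ p := by exact_mod_cast hp.two_le
  have hm0 : 0 < m := by nlinarith
  obtain ⟨δ, hδ⟩ := (Nat.prime_iff_prime_int.mp hp).exists_eq_mul_sq_of_mul_eq_sq
    (c := m * (p * m - 1) - a) (d := Δ) (by rw [← h, hm]; ring)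
  rw [← sq_abs] at hδ
  have hkey : a + m = p * (m ^ 2 - |δ| ^ 2) := by linear_combination -hδ
  have hδm : |δ| < m := by
    by_contra! hle
    nlinarith [pow_le_pow_left₀ hm0.le hle 2]
  have hM : 2 * m - 1 ≤ m ^ 2 - |δ| ^ 2 := by nlinarith [abs_nonneg δ]
  nlinarith

theorem not_dvd_mul_sub_one_of_eq_sq {p : ℕ} (hp : p.Prime) {a b Δ : ℤ} (ha : 0 < a)
    (hb : 3 ≤ b) (hbp : b ≠ p + 1) (h : a * b * (a * b - 1) - p * a = Δ ^ 2) :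
    ¬ (p : ℤ) ∣ a * b - 1 := by
  rintro ⟨m, hm⟩
  have hp2 : (2 : ℤ) ≤ p := by exact_mod_cast hp.two_le
  have hm0 : 0 < m := by nlinarith
  obtain ⟨δ, hδ⟩ := (Nat.prime_iff_prime_int.mp hp).exists_eq_mul_sq_of_mul_eq_sq
    (c := (p * m + 1) * m - a) (d := Δ) (by rw [← h, show a * b = p * m + 1 by linarith]; ring)
  rw [← sq_abs] at hδ
  have hkey : a - m = p * (m ^ 2 - |δ| ^ 2) := by linear_combination -hδ
  rcases lt_trichotomy |δ| m with hlt | heq | hgt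
  · have hM : 2 * m - 1 ≤ m ^ 2 - |δ| ^ 2 := by nlinarith [abs_nonneg δ]
    nlinarith
  · obtain rfl : m = a := by rw [heq, sub_self, mul_zero] at hkey; linarith
    obtain rfl : m = 1 := Int.eq_one_of_mul_eq_one_right ha.le (b := b - p) (by linarith)
    exact hbp (by linarith)
  · have hM : 2 * m + 1 ≤ |δ| ^ 2 - m ^ 2 := by nlinarith
    nlinarith

theorem stmt_13_general (p : ℕ) [Fact p.Prime] (hp1 : p % 4 = 1) (a b Δ : ℤ)
    (ha : 0 < a) (hb : 0 < b) (hb4 : b % 4 = 3)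
    (heq : a * b * (a * b - 1) - (p : ℤ) * a = Δ ^ 2) :
    legendreSym p (a * b) = -1 ∧ legendreSym p (a * b - 1) = -1 := by
  have hp : p.Prime := Fact.out
  have hpab := not_dvd_mul_of_eq_sq hp ha (by omega) heq
  have hpab1 := not_dvd_mul_sub_one_of_eq_sq hp ha (by omega) (by omega) heq
  have hprod : J(a * b | p) * J(a * b - 1 | p) = 1 := by
    rw [← jacobiSym.mul_left]
    have hmod : a * b * (a * b - 1) ≡ Δ ^ 2 [ZMOD p] :=
      Int.modEq_iff_dvd.mpr ⟨-a, by linear_combination -heq⟩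
    exact jacobiSym.eq_one_of_modEq_sq hmod
      (jacobiSym.ne_zero_of_not_dvd ((Nat.prime_iff_prime_int.mp hp).not_dvd_mul hpab hpab1))
  have hneg : J(a * b | p) = -1 := by
    lift a to ℕ using ha.le
    lift b to ℕ using hb.le
    obtain ⟨K, hK⟩ : ∃ K : ℕ, (K : ℤ) = a * b ^ 2 - b - p :=
      ⟨_, Int.toNat_of_nonneg (nonneg_of_mul_nonneg_right (by nlinarith [sq_nonneg Δ]) ha)⟩
    refine jacobiSym.mul_eq_neg_one_of_mul_eq_sq hp1 (by omega) hpab (K := K) (D := Δ.natAbs)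
      (by exact_mod_cast (by linarith : (K + b + p : ℤ) = a * b ^ 2)) ?_
    have hsq : (a * K : ℤ) = Δ.natAbs ^ 2 := by rw [Int.natAbs_sq, hK]; linear_combination heq
    exact_mod_cast hsq
  rw [jacobiSym.legendreSym.to_jacobiSym, jacobiSym.legendreSym.to_jacobiSym, hneg]
  exact ⟨rfl, by rw [hneg] at hprod; linarith⟩

/-- Let `p ≡ 1 (mod 4)` be a prime and suppose positive integers `a, b, Δ` with
`b ≡ 3 (mod 4)` satisfy `a*b*(a*b-1) - p*a = Δ^2` and `p + b ≡ 0 (mod 4)`.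
Then `(ab/p) = ((ab-1)/p) = -1`. -/
theorem stmt_13 (p : ℕ) [Fact p.Prime] (hp1 : p % 4 = 1) (a b Δ : ℤ)
    (ha : 0 < a) (hb : 0 < b) (hΔ : 0 < Δ) (hb4 : b % 4 = 3)
    (heq : a * b * (a * b - 1) - (p : ℤ) * a = Δ ^ 2)
    (hpb : ((p : ℤ) + b) % 4 = 0) :
    legendreSym p (a * b) = -1 ∧ legendreSym p (a * b - 1) = -1 :=
  stmt_13_general p hp1 a b Δ ha hb hb4 heq
end

section
/- Let p be a prime with p ≡ 3 (mod 4) and suppose there exist positive integers a, b, Δ with b ≡ 1 (mod 4) such that ab(ab−1) − pa = Δ². Then the Legendre symbols satisfy (ab/p) = ((ab−1)/p) = 1. -/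
/-!
Put `c = b(ab - 1) - p`, so that `a c = Δ²`. Splitting off `g = gcd(a, c)` gives `a = g u²`,
`c = g v²`, hence `g((ub)² - v²) = b + p` and `b(ab - 1) = g v² + p`. Comparing sizes in the first
identity shows that `p` divides none of `g, u, v, b`, so both symbols equal `(g/p)(b/p)`.
Reciprocity with `b ≡ 1 (mod 4)` and `p ≡ -g v² (mod b)` gives `(b/p) = (g/b)`, so it remains to
see `J(g | pb) = 1`, where `pb ≡ 3 (mod 4)` and `g ∣ pb + b²`. For the odd part `g₀` of `g` this
follows from reciprocity and `pb ≡ -b² (mod g₀)`; the power of `2` in `g` is even unless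
`pb ≡ 7 (mod 8)`, because `(b + p)/g = (ub)² - v²` is not `≡ 2 (mod 4)`.
-/

open ZMod
open scoped NumberTheorySymbols

theorem Int.sq_sub_sq_emod_four_ne_two (x y : ℤ) : (x ^ 2 - y ^ 2) % 4 ≠ 2 := by
  rcases Int.even_or_odd' x with ⟨k, rfl | rfl⟩ <;>
    rcases Int.even_or_odd' y with ⟨l, rfl | rfl⟩ <;> ring_nf <;> omega

theorem Int.exists_pos_sq_of_gcd_eq_one {a b c : ℤ} (h : a.gcd b = 1) (ha : 0 < a)
    (heq : a * b = c ^ 2) : ∃ u, 0 < u ∧ a = u ^ 2 := by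
  obtain ⟨u, hu | hu⟩ := Int.sq_of_gcd_eq_one h heq
  · refine ⟨|u|, abs_pos.mpr ?_, by rw [sq_abs, hu]⟩
    rintro rfl
    simp [hu] at ha
  · nlinarith [sq_nonneg u]

theorem Int.exists_eq_mul_sq_of_mul_eq_sq {a c d : ℤ} (ha : 0 < a) (hc : 0 < c)
    (h : a * c = d ^ 2) : ∃ g u v : ℤ, 0 < g ∧ 0 < u ∧ 0 < v ∧ a = g * u ^ 2 ∧ c = g * v ^ 2 := by
  obtain ⟨g, a', c', hg, hcop, rfl, rfl⟩ :=
    Int.exists_gcd_one' (Int.gcd_pos_of_ne_zero_left c ha.ne')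
  have hg' : (0 : ℤ) < g := by exact_mod_cast hg
  obtain ⟨k, rfl⟩ : (g : ℤ) ∣ d := by
    rw [← Int.pow_dvd_pow_iff two_ne_zero]
    exact ⟨a' * c', by rw [← h]; ring⟩
  have hk : a' * c' = k ^ 2 := by
    have : (g : ℤ) ^ 2 * (a' * c') = g ^ 2 * k ^ 2 := by linear_combination h
    exact mul_left_cancel₀ (by positivity) this
  obtain ⟨u, hu, rfl⟩ := Int.exists_pos_sq_of_gcd_eq_one hcop (pos_of_mul_pos_left ha hg'.le) hk
  obtain ⟨v, hv, rfl⟩ := Int.exists_pos_sq_of_gcd_eq_one (b := u ^ 2) (c := k)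
    (by rwa [Int.gcd_comm]) (pos_of_mul_pos_left hc hg'.le) (by linear_combination hk)
  exact ⟨g, u, v, hg', hu, hv, mul_comm _ _, mul_comm _ _⟩

theorem jacobiSym_two_pow_eq_one {n e : ℕ} {m x : ℤ} (hn : n % 4 = 3)
    (h : 2 ^ e * m = n + x ^ 2) (hm : m % 4 ≠ 2) : J(2 | n) ^ e = 1 := by
  have hn' : Odd n := Nat.odd_iff.mpr (by omega)
  rcases Nat.even_or_odd e with ⟨k, rfl⟩ | ⟨k, rfl⟩
  · have h2n : Int.gcd 2 n = 1 := Nat.coprime_two_left.mpr hn'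
    rw [← two_mul, pow_mul, jacobiSym.sq_one h2n, one_pow]
  · -- for odd `e`, `x` is odd and `2 ^ e * m ≡ 0 [ZMOD 8]` as `m % 4 ≠ 2`, so `n ≡ 7 [MOD 8]`
    obtain ⟨l, rfl⟩ : Odd x := by
      by_contra hx
      obtain ⟨l, rfl⟩ := Int.not_odd_iff_even.mp hx
      obtain ⟨t, ht⟩ : (2 : ℤ) ∣ 2 ^ (2 * k + 1) * m :=
        dvd_mul_of_dvd_left (dvd_pow_self 2 (by omega)) m
      have : (l + l) ^ 2 = 2 * (2 * l ^ 2) := by ring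
      omega
    obtain ⟨s, hs⟩ := Int.even_mul_succ_self l
    have hx2 : (2 * l + 1) ^ 2 = 8 * s + 1 := by linear_combination 4 * hs
    suffices n % 8 = 7 by
      rw [jacobiSym.at_two hn', χ₈_nat_mod_eight, this]
      exact one_pow _
    rcases k with _ | k
    · norm_num at h
      omega
    · obtain ⟨t, ht⟩ : (2 ^ 3 : ℤ) ∣ 2 ^ (2 * (k + 1) + 1) * m :=
        dvd_mul_of_dvd_left (pow_dvd_pow 2 (by omega)) m
      omega

theorem jacobiSym_eq_one_of_odd_of_dvd_add_sq {n g : ℕ} {x : ℤ} (hn : n % 4 = 3) (hg : Odd g)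
    (hx : IsCoprime x g) (h : (g : ℤ) ∣ n + x ^ 2) : J(g | n) = 1 := by
  have hnx : J(n | g) = χ₄ g := by
    have hmod : (n : ℤ) ≡ -1 * x ^ 2 [ZMOD g] :=
      Int.modEq_iff_dvd.mpr (by rw [show -1 * x ^ 2 - n = -(n + x ^ 2) by ring]; exact h.neg_right)
    rw [jacobiSym.mod_left' hmod, jacobiSym.mul_left, jacobiSym.at_neg_one hg,
      jacobiSym.sq_one' (Int.isCoprime_iff_gcd_eq_one.mp hx), mul_one]
  rcases Nat.odd_mod_four_iff.mp (Nat.odd_iff.mp hg) with hg4 | hg4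
  · rw [jacobiSym.quadratic_reciprocity_one_mod_four hg4 (Nat.odd_iff.mpr (by omega)), hnx,
      χ₄_nat_one_mod_four hg4]
  · rw [jacobiSym.quadratic_reciprocity_three_mod_four hg4 hn, hnx, χ₄_nat_three_mod_four hg4,
      neg_neg]

theorem jacobiSym_eq_one_of_mul_eq_add_sq {n : ℕ} {g m x : ℤ} (hn : n % 4 = 3) (hg : 0 < g)
    (hgx : IsCoprime g x) (h : g * m = n + x ^ 2) (hm : m % 4 ≠ 2) : J(g | n) = 1 := by
  obtain ⟨e, g₀, hg₀, hg'⟩ := Nat.exists_eq_two_pow_mul_odd (n := g.natAbs) (by omega)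
  have hg_eq : g = 2 ^ e * g₀ := by
    rw [← Int.natAbs_of_nonneg hg.le, hg']
    push_cast
    rfl
  subst hg_eq
  have hg₀m : (g₀ * m) % 4 ≠ 2 := by
    have h₁ : (g₀ : ℤ) % 4 = 1 ∨ (g₀ : ℤ) % 4 = 3 := by
      have := Nat.odd_mod_four_iff.mp (Nat.odd_iff.mp hg₀)
      omega
    have h₂ : m % 4 = 0 ∨ m % 4 = 1 ∨ m % 4 = 3 := by omega
    rw [Int.mul_emod]
    rcases h₁ with h₁ | h₁ <;> rcases h₂ with h₂ | h₂ | h₂ <;> norm_num [h₁, h₂]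
  rw [jacobiSym.mul_left, jacobiSym.pow_left,
    jacobiSym_two_pow_eq_one hn (by rw [← h]; ring) hg₀m,
    jacobiSym_eq_one_of_odd_of_dvd_add_sq hn hg₀ hgx.of_mul_left_right.symm
      (by rw [← h]; exact (dvd_mul_left _ _).mul_right m), one_mul]

theorem jacobiSym_eq_of_dvd_add_mul_sq {b p : ℕ} {g v : ℤ} (hb : b % 4 = 1) (hp : Odd p)
    (hv : IsCoprime v b) (h : (b : ℤ) ∣ p + g * v ^ 2) : J(b | p) = J(g | b) := by
  have hmod : (p : ℤ) ≡ -1 * g * v ^ 2 [ZMOD b] := Int.modEq_iff_dvd.mpr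
    (by rw [show -1 * g * v ^ 2 - p = -(p + g * v ^ 2) by ring]; exact h.neg_right)
  rw [jacobiSym.quadratic_reciprocity_one_mod_four hb hp, jacobiSym.mod_left' hmod,
    jacobiSym.mul_left, jacobiSym.mul_left, jacobiSym.at_neg_one (Nat.odd_iff.mpr (by omega)),
    χ₄_nat_one_mod_four hb, jacobiSym.sq_one' (Int.isCoprime_iff_gcd_eq_one.mp hv), one_mul,
    mul_one]

theorem jacobiSym_mul_jacobiSym_eq_one {p b : ℕ} {g u v : ℤ} (hp : p % 4 = 3) (hb : b % 4 = 1)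
    (hg : 0 < g) (hgv : IsCoprime (g * v ^ 2) b) (hE : g * ((u * b) ^ 2 - v ^ 2) = b + p)
    (hdvd : (b : ℤ) ∣ p + g * v ^ 2) : J(g | p) * J(b | p) = 1 := by
  have : NeZero p := ⟨by omega⟩
  have : NeZero b := ⟨by omega⟩
  rw [jacobiSym_eq_of_dvd_add_mul_sq hb (Nat.odd_iff.mpr (by omega))
    ((IsCoprime.pow_left_iff two_pos).mp hgv.of_mul_left_right) hdvd,
    ← jacobiSym.mul_right]
  refine jacobiSym_eq_one_of_mul_eq_add_sq (m := b * ((u * b) ^ 2 - v ^ 2))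
    (by simp [Nat.mul_mod, hp, hb]) hg hgv.of_mul_left_left ?_ ?_
  · push_cast
    linear_combination (b : ℤ) * hE
  · rw [Int.mul_emod, (by omega : (b : ℤ) % 4 = 1), one_mul, Int.emod_emod_of_dvd _ dvd_rfl]
    exact Int.sq_sub_sq_emod_four_ne_two _ _

theorem isCoprime_of_mul_eq_add {b w x p : ℤ} (h : b * w = x + p) (hp : IsCoprime p b) :
    IsCoprime x b := by
  rw [isCoprime_comm, (by linear_combination -h : x = -p + b * w),
    IsCoprime.add_mul_left_right_iff, IsCoprime.neg_right_iff]
  exact hp.symm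

theorem sub_pos_and_add_le_of_mul_sq_sub_sq_eq {p b g u v : ℤ} (hbp : 0 < b + p) (hg : 0 < g)
    (hy : 0 < u * b + v) (hE : g * ((u * b) ^ 2 - v ^ 2) = b + p) :
    0 < u * b - v ∧ u * b + v ≤ b + p := by
  have hE' : g * (u * b - v) * (u * b + v) = b + p := by linear_combination hE
  have hx : 0 < g * (u * b - v) := pos_of_mul_pos_left (hE' ▸ hbp) hy.le
  exact ⟨pos_of_mul_pos_right hx hg.le, by nlinarith⟩

theorem not_dvd_of_mul_sq_sub_sq_eq {p : ℕ} {b g u v : ℤ} (hp : p % 4 = 3) (hb : 0 < b)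
    (hb4 : b % 4 = 1) (hg : 0 < g) (hu : 0 < u) (hv : 0 < v)
    (hE : g * ((u * b) ^ 2 - v ^ 2) = b + p) :
    ¬ (p : ℤ) ∣ g ∧ ¬ (p : ℤ) ∣ u ∧ ¬ (p : ℤ) ∣ v := by
  have hp3 : (3 : ℤ) ≤ p := by omega
  have hub : b ≤ u * b := le_mul_of_one_le_left hb.le hu
  obtain ⟨hx, hy⟩ := sub_pos_and_add_le_of_mul_sq_sub_sq_eq (by omega) hg (by omega) hE
  have hE' : g * (u * b - v) * (u * b + v) = b + p := by linear_combination hE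
  refine ⟨fun h => ?_, fun h => ?_, fun h => ?_⟩
  · have hgx : p ≤ g * (u * b - v) := by nlinarith [Int.le_of_dvd hg h]
    nlinarith
  · have hpb : p * b ≤ u * b := mul_le_mul_of_nonneg_right (Int.le_of_dvd hu h) hb.le
    obtain rfl : v = 1 := by nlinarith
    have : (u * b - 1) * (u * b + 1) ≤ b + p := by
      rw [← hE', mul_assoc]
      exact le_mul_of_one_le_left (mul_nonneg hx.le (by omega)) hg
    nlinarith
  · obtain rfl : v = p := le_antisymm (by linarith) (Int.le_of_dvd hv h)
    have hgx : g * (u * b - p) = 1 := by nlinarith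
    have : u * b - p = 1 := by nlinarith
    omega

/-- Let `p ≡ 3 (mod 4)` be a prime and suppose positive integers `a, b, Δ` with
`b ≡ 1 (mod 4)` satisfy `a*b*(a*b-1) - p*a = Δ^2`.
Then `(ab/p) = ((ab-1)/p) = 1`. -/
theorem stmt_14 (p : ℕ) [Fact p.Prime] (hp3 : p % 4 = 3) (a b Δ : ℤ)
    (ha : 0 < a) (hb : 0 < b) (hΔ : 0 < Δ) (hb4 : b % 4 = 1)
    (heq : a * b * (a * b - 1) - (p : ℤ) * a = Δ ^ 2) :
    legendreSym p (a * b) = 1 ∧ legendreSym p (a * b - 1) = 1 := by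
  have hpz : Prime (p : ℤ) := Nat.prime_iff_prime_int.mp Fact.out
  have gcd_eq_one {z : ℤ} (hz : ¬ (p : ℤ) ∣ z) : z.gcd p = 1 :=
    Int.isCoprime_iff_gcd_eq_one.mp (hpz.coprime_iff_not_dvd.mpr hz).symm
  lift b to ℕ using hb.le
  have hac : a * (b * (a * b - 1) - p) = Δ ^ 2 := by linear_combination heq
  have hc : 0 < b * (a * b - 1) - p := pos_of_mul_pos_right (hac ▸ by positivity) ha.le
  obtain ⟨g, u, v, hg, hu, hv, rfl, hcg⟩ := Int.exists_eq_mul_sq_of_mul_eq_sq ha hc hac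
  have hbm : b * (g * u ^ 2 * b - 1) = g * v ^ 2 + p := by linear_combination hcg
  have hE : g * ((u * b) ^ 2 - v ^ 2) = b + p := by linear_combination hbm
  obtain ⟨hpg, hpu, hpv⟩ := not_dvd_of_mul_sq_sub_sq_eq hp3 hb hb4 hg hu hv hE
  have hpgv : ¬ (p : ℤ) ∣ g * v ^ 2 := hpz.not_dvd_mul hpg (hpv ∘ hpz.dvd_of_dvd_pow)
  have hpb : ¬ (p : ℤ) ∣ b := fun h => hpgv ((dvd_add_left dvd_rfl).mp (hbm ▸ h.mul_right _))
  have hgv : IsCoprime (g * v ^ 2) b :=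
    isCoprime_of_mul_eq_add hbm (hpz.coprime_iff_not_dvd.mpr hpb)
  have key : J(g | p) * J(b | p) = 1 := jacobiSym_mul_jacobiSym_eq_one hp3 (by omega) hg hgv hE
    ⟨g * u ^ 2 * b - 1, by linear_combination -hbm⟩
  have hb2 : J(b | p) ^ 2 = 1 := jacobiSym.sq_one (gcd_eq_one hpb)
  have hsplit : J(b | p) * J(g * u ^ 2 * b - 1 | p) = J(g | p) := by
    rw [← jacobiSym.mul_left, hbm, jacobiSym.mod_left' (Int.add_emod_right _ _),
      jacobiSym.mul_left, jacobiSym.sq_one' (gcd_eq_one hpv), mul_one]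
  simp only [jacobiSym.legendreSym.to_jacobiSym]
  refine ⟨?_, by linear_combination -J(g * u ^ 2 * b - 1 | p) * hb2 + J(b | p) * hsplit + key⟩
  rw [jacobiSym.mul_left, jacobiSym.mul_left, jacobiSym.sq_one' (gcd_eq_one hpu), mul_one, key]
end

section
/- Let p be a prime with p ≡ 1 (mod 4) and suppose there exist positive integers a, b, Δ' with a ≥ 1, Δ' ≥ 1, b ≡ 3 (mod 4) and 1 < ab < p, such that p = a(b² − Δ'²) − b. Then the Legendre symbol satisfies ((b² − Δ'²)/p) = −1. -/
/-!
Put `m = b² - Δ'² > 0`, so that `a m = p + b`. As `b` is odd, either `m` is odd, or `Δ'` is odd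
too and `8 ∣ m`; moreover `4 ∣ p + b`. Quadratic reciprocity shows that `J(m | n) = J(m | n')`
for odd `n, n'` whose sum is divisible by `m` and `4`, and by `8` when `m` is even. Hence
`(m / p) = J(m | b) = J(-Δ'² | b) = J(-1 | b) = -1`, because `b ≡ 3 (mod 4)` and `gcd(Δ', b)`
divides `p > b`.
-/

open NumberTheorySymbols jacobiSym ZMod

namespace jacobiSym

/-- Reciprocity turns `J(m | n)` into `±J(-n' | m)`; the signs cancel as `n ≡ -n' (mod 4)`. -/
theorem eq_of_odd_of_dvd_add {m n n' : ℕ} (hm : Odd m) (hn : Odd n) (hn' : Odd n')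
    (hmn : m ∣ n + n') (h4 : 4 ∣ n + n') : J(m | n) = J(m | n') := by
  have hneg : J(n | m) = χ₄ m * J(n' | m) := by
    have hmod : (n : ℤ) ≡ -1 * n' [ZMOD m] := Int.modEq_iff_dvd.mpr <| by
      rw [show (-1 * n' - n : ℤ) = -((n + n' : ℕ) : ℤ) by push_cast; ring]
      exact (Int.natCast_dvd_natCast.mpr hmn).neg_right
    rw [mod_left' hmod, mul_left, at_neg_one hm]
  rw [← quadratic_reciprocity_if (Nat.odd_iff.mp hm) (Nat.odd_iff.mp hn),
    ← quadratic_reciprocity_if (Nat.odd_iff.mp hm) (Nat.odd_iff.mp hn'), hneg]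
  have hm4 := Nat.odd_mod_four_iff.mp (Nat.odd_iff.mp hm)
  have hnn' : n % 4 = 1 ∧ n' % 4 = 3 ∨ n % 4 = 3 ∧ n' % 4 = 1 := by
    have := Nat.odd_iff.mp hn; omega
  rcases hm4 with hm4 | hm4
  · rw [χ₄_nat_one_mod_four hm4]
    rcases hnn' with ⟨h, h'⟩ | ⟨h, h'⟩ <;> simp [hm4, h, h']
  · rw [χ₄_nat_three_mod_four hm4]
    rcases hnn' with ⟨h, h'⟩ | ⟨h, h'⟩ <;> simp [hm4, h, h']

theorem two_eq_of_dvd_add {n n' : ℕ} (hn : Odd n) (hn' : Odd n') (h8 : 8 ∣ n + n') :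
    J(2 | n) = J(2 | n') := by
  rw [at_two hn, at_two hn', χ₈_nat_eq_if_mod_eight, χ₈_nat_eq_if_mod_eight]
  have := Nat.odd_iff.mp hn; have := Nat.odd_iff.mp hn'
  split_ifs <;> first | rfl | (exfalso; omega)

theorem eq_of_dvd_add_s15 {m n n' : ℕ} (hn : Odd n) (hn' : Odd n') (hmn : m ∣ n + n')
    (h4 : 4 ∣ n + n') (h8 : Even m → 8 ∣ n + n') : J(m | n) = J(m | n') := by
  have hm : m ≠ 0 := by rintro rfl; have := Nat.odd_iff.mp hn; simp at hmn; omega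
  obtain ⟨k, m₀, hm₀, rfl⟩ := Nat.exists_eq_two_pow_mul_odd hm
  have htwo : J(2 | n) ^ k = J(2 | n') ^ k := by
    rcases k.eq_zero_or_pos with rfl | hk
    · rw [pow_zero, pow_zero]
    · rw [two_eq_of_dvd_add hn hn' (h8 ((Nat.even_pow.mpr ⟨even_two, hk.ne'⟩).mul_right _))]
  push_cast
  rw [mul_left, mul_left, pow_left, pow_left, htwo,
    eq_of_odd_of_dvd_add hm₀ hn hn' (dvd_of_mul_left_dvd hmn) h4]

theorem neg_sq_of_mod_four_eq_three {x : ℤ} {b : ℕ} (hb : b % 4 = 3) (hx : x.gcd b = 1) :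
    J(-x ^ 2 | b) = -1 := by
  rw [neg_eq_neg_one_mul, mul_left, sq_one' hx, mul_one, at_neg_one (Nat.odd_iff.mpr (by omega)),
    χ₄_nat_three_mod_four hb]

end jacobiSym

theorem Int.eight_dvd_sq_sub_sq {x y : ℤ} (hx : Odd x) (h : Even (x ^ 2 - y ^ 2)) :
    8 ∣ x ^ 2 - y ^ 2 := by
  have hy : Odd y := by
    have : Odd (y ^ 2) := by
      rw [show y ^ 2 = x ^ 2 - (x ^ 2 - y ^ 2) by ring]
      exact hx.pow.sub_even h
    exact (Int.odd_pow.mp this).resolve_right two_ne_zero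
  rw [show x ^ 2 - y ^ 2 = (x ^ 2 - 1) - (y ^ 2 - 1) by ring]
  exact dvd_sub (Int.eight_dvd_sq_sub_one_of_odd hx) (Int.eight_dvd_sq_sub_one_of_odd hy)

theorem Int.gcd_eq_one_of_dvd_prime_of_lt {x : ℤ} {b p : ℕ} (hp : p.Prime) (hb : 0 < b)
    (hbp : b < p) (hdvd : (x.gcd b : ℤ) ∣ p) : x.gcd b = 1 := by
  have hle : x.gcd b ≤ b := Nat.le_of_dvd hb (Int.natCast_dvd_natCast.mp (Int.gcd_dvd_right x b))
  exact (hp.eq_one_or_self_of_dvd _ (Int.natCast_dvd_natCast.mp hdvd)).resolve_right (by omega)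

theorem stmt_15_general (p : ℕ) [Fact p.Prime] (hp1 : p % 4 = 1) (a b Δ' : ℤ)
    (ha : 1 ≤ a) (hb : 0 < b) (hb4 : b % 4 = 3)
    (habp : a * b < (p : ℤ))
    (heq : (p : ℤ) = a * (b ^ 2 - Δ' ^ 2) - b) :
    legendreSym p (b ^ 2 - Δ' ^ 2) = -1 := by
  lift b to ℕ using hb.le
  have hbp : (b : ℤ) < p := (le_mul_of_one_le_left (by omega) ha).trans_lt habp
  have ham : a * (b ^ 2 - Δ' ^ 2) = p + b := by rw [heq]; ring
  obtain ⟨m, hm⟩ : ∃ m : ℕ, (b : ℤ) ^ 2 - Δ' ^ 2 = m :=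
    Int.eq_ofNat_of_zero_le (nonneg_of_mul_nonneg_right (by rw [ham]; omega) (by omega))
  have hmdvd : (m : ℤ) ∣ p + b := ⟨a, by rw [← ham, hm, mul_comm]⟩
  have hcop : Δ'.gcd b = 1 := by
    refine Int.gcd_eq_one_of_dvd_prime_of_lt (p := p) Fact.out (by omega) (by omega) ?_
    rw [heq]
    exact dvd_sub (dvd_mul_of_dvd_right (dvd_sub (dvd_pow (Int.gcd_dvd_right Δ' b) two_ne_zero)
      (dvd_pow (Int.gcd_dvd_left Δ' b) two_ne_zero)) a) (Int.gcd_dvd_right Δ' b)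
  have h8 : Even m → 8 ∣ p + b := fun hme => by
    have hbodd : Odd (b : ℤ) := Int.odd_iff.mpr (by omega)
    have h8m : (8 : ℤ) ∣ m :=
      hm ▸ Int.eight_dvd_sq_sub_sq hbodd (hm ▸ (Int.even_coe_nat m).mpr hme)
    exact Int.natCast_dvd_natCast.mp (by push_cast; exact h8m.trans hmdvd)
  have hmb : (m : ℤ) ≡ -Δ' ^ 2 [ZMOD b] := Int.modEq_iff_dvd.mpr ⟨-b, by rw [← hm]; ring⟩
  rw [legendreSym.to_jacobiSym, hm,
    eq_of_dvd_add_s15 (n' := b) (Nat.odd_iff.mpr (by omega)) (Nat.odd_iff.mpr (by omega))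
      (Int.natCast_dvd_natCast.mp (by exact_mod_cast hmdvd)) (by omega) h8,
    mod_left' hmb, neg_sq_of_mod_four_eq_three (by omega) hcop]

/-- Let `p ≡ 1 (mod 4)` be a prime and suppose positive integers `a, b, Δ'` with
`a ≥ 1`, `Δ' ≥ 1`, `b ≡ 3 (mod 4)` and `1 < ab < p` satisfy
`p = a (b² - Δ'²) - b`. Then `((b² - Δ'²)/p) = -1`. -/
theorem stmt_15 (p : ℕ) [Fact p.Prime] (hp1 : p % 4 = 1) (a b Δ' : ℤ)
    (ha : 1 ≤ a) (hb : 0 < b) (hΔ' : 1 ≤ Δ') (hb4 : b % 4 = 3)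
    (hab1 : 1 < a * b) (habp : a * b < (p : ℤ))
    (heq : (p : ℤ) = a * (b ^ 2 - Δ' ^ 2) - b) :
    legendreSym p (b ^ 2 - Δ' ^ 2) = -1 :=
  stmt_15_general p hp1 a b Δ' ha hb hb4 habp heq
end

section
/- For every prime p with p ≡ 1 (mod 4) there exist positive integers a, b, Δ with 1 ≤ b < p and b ≡ 3 (mod 4) such that ab(ab−1) ≡ Δ² (mod pa). -/
/-- For every prime `p ≡ 1 (mod 4)` there exist positive integers `a, b, Δ` with
`1 ≤ b < p` and `b ≡ 3 (mod 4)` such that `a*b*(a*b-1) ≡ Δ² (mod p*a)`. -/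
theorem stmt_16 (p : ℕ) (hp : p.Prime) (hp1 : p % 4 = 1) :
    ∃ a b Δ : ℤ, 0 < a ∧ 1 ≤ b ∧ b < (p : ℤ) ∧ b % 4 = 3 ∧ 0 < Δ ∧
      ((p : ℤ) * a) ∣ (a * b * (a * b - 1) - Δ ^ 2) := by
  have hp2 := hp.two_le
  have hp5 : 5 ≤ p := by
    rcases Nat.lt_or_ge p 5 with h | h
    · interval_cases p <;> omega
    · exact h
  by_cases hps : p = 5
  · subst hps
    exact ⟨1, 3, 1, by norm_num, by norm_num, by norm_num, by norm_num, by norm_num,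
      by norm_num⟩
  · haveI : Fact p.Prime := ⟨hp⟩
    set x : ZMod p := 3 * 5⁻¹ with hx
    have h5 : (5 : ZMod p) ≠ 0 := by
      intro h
      exact hps ((Nat.prime_dvd_prime_iff_eq hp (by norm_num)).mp
          ((ZMod.natCast_eq_zero_iff 5 p).mp (by exact_mod_cast h)))
    have h5x : 5 * x = 3 := by
      rw [hx]; field_simp
    have hxne : x ≠ 0 := by
      intro h
      have h3 : (3 : ZMod p) = 0 := by rw [← h5x, h, mul_zero]
      have : ((3 : ℕ) : ZMod p) = 0 := by exact_mod_cast h3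
      have hd : p ∣ 3 := (ZMod.natCast_eq_zero_iff 3 p).mp this
      have := (Nat.prime_dvd_prime_iff_eq hp (by norm_num)).mp hd
      omega
    have hval : x.val ≠ 0 := fun h => hxne (by rwa [← ZMod.val_eq_zero])
    refine ⟨(x.val : ℤ), 3, 2 * (x.val : ℤ), by exact_mod_cast Nat.pos_of_ne_zero hval,
      by norm_num, by exact_mod_cast (show 3 < p by omega), by norm_num,
      by positivity, ?_⟩
    have hdvd : (p : ℤ) ∣ 5 * (x.val : ℤ) - 3 := by
      rw [← ZMod.intCast_zmod_eq_zero_iff_dvd]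
      push_cast
      simp [ZMod.natCast_val, ZMod.cast_id, h5x]
    have : (p : ℤ) * (x.val : ℤ) ∣ (5 * (x.val : ℤ) - 3) * (x.val : ℤ) :=
      mul_dvd_mul hdvd dvd_rfl
    convert this using 1
    ring
end

section
/- Let n > 1 be a positive integer and suppose there exist positive integers a, c, d, Δ and an integer b with 1 ≤ b < n such that ab(ab−1) − nac = Δ² and (2ab−1)² − (4na+1)d = 4Δ². Then c = d = 1; in particular ab(ab−1) − na = Δ². -/
/-- Let `n > 1` and suppose positive integers `a, c, d, Δ` and an integer `b`
with `1 ≤ b < n` satisfy `a*b*(a*b-1) - n*a*c = Δ²` and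
`(2ab-1)² - (4na+1)d = 4Δ²`. Then `c = d = 1`; in particular
`a*b*(a*b-1) - n*a = Δ²`. -/
theorem stmt_18 (n : ℤ) (hn : 1 < n) (a b c d Δ : ℤ)
    (ha : 0 < a) (hc : 0 < c) (hd : 0 < d) (hΔ : 0 < Δ)
    (hb : 1 ≤ b) (hbn : b < n)
    (heq1 : a * b * (a * b - 1) - n * a * c = Δ ^ 2)
    (heq2 : (2 * a * b - 1) ^ 2 - (4 * n * a + 1) * d = 4 * Δ ^ 2) :
    c = 1 ∧ d = 1 ∧ a * b * (a * b - 1) - n * a = Δ ^ 2 := by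
  have key : 4 * n * a * (c - d) = d - 1 := by linear_combination heq2 - 4 * heq1
  have hna : 0 < n * a := by positivity
  have hdc : d ≤ c := by nlinarith
  have hcd : c ≤ d := by
    by_contra h
    push_neg at h
    have hd1 : 4 * n * a + 1 ≤ d := by nlinarith
    have hab : 2 * a * b - 1 ≤ 2 * a * (n - 1) - 1 := by nlinarith
    have hab0 : 0 < 2 * a * b - 1 := by nlinarith
    nlinarith [sq_nonneg Δ, sq_nonneg (2 * a * b - 1)]
  have hcd2 : c = d := le_antisymm hcd hdc
  subst hcd2
  have hde : c = 1 := by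
    have h0 : c - 1 = 0 := by simpa using key.symm
    omega
  refine ⟨hde, hde, ?_⟩
  rw [hde] at heq1
  linarith
end

section
/- Let n ≡ 1 (mod 4) be a positive integer and suppose there exist positive integers a, b, c, d, Δ with 1 ≤ b < n and b ≡ 3 (mod 4) satisfying the system of equations ab(ab−1) − nac = Δ² and (2ab−1)² − (4na+1)d = 4Δ². Then ab(ab−1) − na = Δ². -/
/-- Let `n ≡ 1 (mod 4)` be a positive integer and suppose positive integers
`a, b, c, d, Δ` with `1 ≤ b < n` and `b ≡ 3 (mod 4)` satisfy the system
`a*b*(a*b-1) - n*a*c = Δ²` and `(2ab-1)² - (4na+1)d = 4Δ²`.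
Then `a*b*(a*b-1) - n*a = Δ²`. -/
theorem stmt_19 (n : ℤ) (hn : 0 < n) (hn1 : n % 4 = 1) (a b c d Δ : ℤ)
    (ha : 0 < a) (hc : 0 < c) (hd : 0 < d) (hΔ : 0 < Δ)
    (hb : 1 ≤ b) (hbn : b < n) (hb4 : b % 4 = 3)
    (heq1 : a * b * (a * b - 1) - n * a * c = Δ ^ 2)
    (heq2 : (2 * a * b - 1) ^ 2 - (4 * n * a + 1) * d = 4 * Δ ^ 2) :
    a * b * (a * b - 1) - n * a = Δ ^ 2 := by
  have key : d - 1 = 4 * n * a * (c - d) := by linear_combination 4 * heq1 - heq2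
  have hna : 0 < n * a := mul_pos hn ha
  have hcd : c = d := by
    rcases lt_trichotomy c d with h | h | h
    · exfalso
      have h1 : c - d ≤ -1 := by omega
      nlinarith [mul_pos hn ha]
    · exact h
    · exfalso
      have h1 : d - 1 ≥ 4 * n * a := by nlinarith [mul_pos hn ha]
      have h2 : c ≥ 4 * n * a + 2 := by omega
      have h3 : n * a * (4 * n * a + 2) ≤ n * a * c :=
        mul_le_mul_of_nonneg_left h2 (le_of_lt hna)
      have h4 : 0 < a * a * ((n - b) * (n + b)) :=
        mul_pos (mul_pos ha ha) (mul_pos (by linarith) (by linarith))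
      nlinarith [sq_nonneg Δ, mul_pos (mul_pos hn hn) (mul_pos ha ha)]
  have hd1 : d = 1 := by
    rw [hcd] at key; simp at key; omega
  have hc1 : c = 1 := by omega
  rw [hc1] at heq1; linarith
end
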